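/- Let n = 2m and let C ⊆ {0,1}^{n−1} be closed under cyclic shifts. For every c ∈ B(C), one has Γ_C(c) = {0} ∪ {i ∈ {1,…,m−1} : CR(c)_j ≠ 0 for all 1 ≤ j ≤ i}, where CR(c) is the cyclic running sum of c. -/

import Mathlib

/-- The Hamming weight of a binary word `x ∈ {0,1}^N`: the number of ones. -/
def wt {N : ℕ} (x : Fin N → Bool) : ℕ :=
  (Finset.univ.filter (fun i => x i = true)).card

/-- `Flip x j` complements the first `j` bits of `x`. -/
def Flip {N : ℕ} (x : Fin N → Bool) (j : ℕ) : Fin N → Bool :=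
  fun i => if (i : ℕ) < j then !(x i) else x i

/-- `cyc x i` is the cyclic right shift of `x` by `i` positions. -/
def cyc {N : ℕ} (x : Fin N → Bool) (i : ℕ) : Fin N → Bool :=
  fun j => x ⟨((j : ℕ) + (N - i % N)) % N, Nat.mod_lt _ j.pos⟩

/-- `j ∈ T_C(x)`: `j ∈ {0,…,n−2}` and `wt(Flip_c(σ(x,j))) ∈ {m−1, m}`,
where `Flip_c` complements the first `m` bits. -/
def TCmem (m : ℕ) (x : Fin (2*m-1) → Bool) (j : ℕ) : Prop :=
  j ≤ 2*m - 2 ∧ (wt (Flip (cyc x j) m) = m - 1 ∨ wt (Flip (cyc x j) m) = m)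

/-- `Γ_C(c)`: the set of shift indices `j ∈ {0,…,2m−2}` such that some `x ∈ C`
has `Flip_c(σ(x,j)) = c` and `min T_C(x) = j`. -/
def GammaC (m : ℕ) (C : Set (Fin (2*m-1) → Bool)) (c : Fin (2*m-1) → Bool) : Set ℕ :=
  {j | j ≤ 2*m - 2 ∧ ∃ x ∈ C, Flip (cyc x j) m = c ∧
    {j' | TCmem m x j'}.Nonempty ∧ sInf {j' | TCmem m x j'} = j}

/-- The cyclic running sum `CR(c)` of `c = c₁…c_{2m−1}`:
`CR(c)₀ = 0` and `CR(c)ᵢ = CR(c)_{i−1} + (−1)^{cᵢ+1} + (−1)^{c_{i+m}+1}`. -/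
def CR (m : ℕ) (c : Fin (2*m-1) → Bool) : ℕ → ℤ
  | 0 => 0
  | i + 1 => CR m c i
      + (if h : i < 2*m - 1 then (if c ⟨i, h⟩ then 1 else -1) else 0)
      + (if h : i + m < 2*m - 1 then (if c ⟨i + m, h⟩ then 1 else -1) else 0)

/-! Write `c = Flip y m` and let `f d = wt (Flip (rot y d) m)`, where `rot y d` rotates `y` left
by `d`. Then `f d = wt y + m - 2·(ones of y in the cyclic window [d, d + m))`, so consecutive
values of `f` differ by at most 2, `f d = f 0 - CR(c)_d` for `d ≤ m - 1` (with `CR(c)_d` even),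
and `f 0 + f m = 2m - 2·y₀`. The last identity and `f 1 - f 0 = 2·(y₀ - y_m)` forbid `f 1` and
`f m` to lie on the same side of `{m - 1, m}`, which a walk with steps of size at most 2 avoiding
`{m - 1, m}` cannot leave: so `f d ∈ {m - 1, m}` for some `1 ≤ d ≤ m`, whatever `y` is.
If `j = min T_C(x)` and `y = σ(x, j)`, then `f d ∉ {m - 1, m}` for `1 ≤ d ≤ j`, whence
`j ≤ m - 1`; and for `d ≤ m - 1`, `f d ∈ {m - 1, m}` iff `CR(c)_d = 0`. -/

open Finset

lemma lt_iff_lt_of_abs_sub_le_two {g : ℕ → ℤ} {k : ℤ} {a b : ℕ} (hab : a ≤ b)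
    (hstep : ∀ d, a ≤ d → d < b → |g (d + 1) - g d| ≤ 2)
    (havoid : ∀ d, a ≤ d → d ≤ b → g d ≠ k ∧ g d ≠ k + 1) :
    g a < k ↔ g b < k := by
  induction b, hab using Nat.le_induction with
  | base => rfl
  | succ b hab ih =>
    rw [ih (fun d h1 h2 => hstep d h1 (by omega)) (fun d h1 h2 => havoid d h1 (by omega))]
    have h := abs_le.1 (hstep b hab (by omega))
    have hb := havoid b hab (by omega)
    have hb' := havoid (b + 1) (by omega) le_rfl
    omega

def rot {N : ℕ} (x : Fin N → Bool) (s : ℕ) : Fin N → Bool :=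
  fun i => x ⟨((i : ℕ) + s) % N, Nat.mod_lt _ i.pos⟩

section Rotation

variable {N : ℕ} (x : Fin N → Bool)

lemma rot_rot (s t : ℕ) : rot (rot x s) t = rot x (s + t) := by
  funext i
  simp only [rot]
  congr 1
  ext
  simp only [Nat.mod_add_mod]
  ring_nf

lemma rot_self : rot x N = x := by
  funext i
  simp [rot, Nat.mod_eq_of_lt i.isLt]

lemma cyc_zero : cyc x 0 = x := by
  funext i
  simp [cyc, Nat.mod_eq_of_lt i.isLt]

lemma cyc_eq_rot {i : ℕ} (hi : i < N) : cyc x i = rot x (N - i) := by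
  funext j
  simp only [cyc, rot, Nat.mod_eq_of_lt hi]

lemma cyc_sub_eq_rot_cyc {j d : ℕ} (hj : j < N) (hd : d ≤ j) :
    cyc x (j - d) = rot (cyc x j) d := by
  rw [cyc_eq_rot x hj, cyc_eq_rot x (by omega), rot_rot]
  congr 1
  omega

end Rotation

section Window

variable {N : ℕ} [NeZero N] (x : Fin N → Bool)

def bitAt (k : ℕ) : ℤ := (x (Fin.ofNat N k)).toNat

lemma bitAt_nonneg (k : ℕ) : 0 ≤ bitAt x k := Int.natCast_nonneg _

lemma bitAt_le_one (k : ℕ) : bitAt x k ≤ 1 := by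
  unfold bitAt; cases x (Fin.ofNat N k) <;> simp

lemma bitAt_of_lt {k : ℕ} (hk : k < N) : bitAt x k = (x ⟨k, hk⟩).toNat := by
  simp only [bitAt]
  congr
  ext
  simp [Nat.mod_eq_of_lt hk]

lemma bitAt_add_self (k : ℕ) : bitAt x (k + N) = bitAt x k := by
  simp only [bitAt]
  congr 3
  ext
  simp

lemma bitAt_rot (s k : ℕ) : bitAt (rot x s) k = bitAt x (k + s) := by
  simp only [bitAt, rot]
  congr 3
  ext
  simp

def windowOnes (m : ℕ) (d : ℕ) : ℤ := ∑ k ∈ range m, bitAt x (k + d)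

lemma windowOnes_succ (m d : ℕ) :
    windowOnes x m (d + 1) = windowOnes x m d + bitAt x (d + m) - bitAt x d := by
  have h := sum_range_succ' (fun k => bitAt x (k + d)) m
  rw [sum_range_succ] at h
  simp only [windowOnes, ← add_assoc, add_right_comm _ 1 d] at h ⊢
  rw [zero_add, add_comm m d] at h
  linarith

lemma windowOnes_rot (m s d : ℕ) : windowOnes (rot x s) m d = windowOnes x m (d + s) := by
  simp only [windowOnes, bitAt_rot, add_assoc]

lemma windowOnes_period (d : ℕ) : windowOnes x N d = windowOnes x N 0 := by
  induction d with
  | zero => rfl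
  | succ d ih => rw [windowOnes_succ, ih, bitAt_add_self]; ring

lemma wt_eq_windowOnes : (wt x : ℤ) = windowOnes x N 0 := by
  rw [wt, card_filter, windowOnes, ← Fin.sum_univ_eq_sum_range]
  push_cast
  refine sum_congr rfl fun i _ => ?_
  rw [add_zero, bitAt_of_lt x i.isLt]
  cases x i <;> rfl

lemma wt_rot (s : ℕ) : wt (rot x s) = wt x := by
  have h := wt_eq_windowOnes (rot x s)
  rw [windowOnes_rot, zero_add, windowOnes_period, ← wt_eq_windowOnes] at h
  exact_mod_cast h

lemma wt_flip {m : ℕ} (hm : m ≤ N) :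
    (wt (Flip x m) : ℤ) = wt x + m - 2 * windowOnes x m 0 := by
  have hbit : ∀ k (hk : k < N), bitAt (Flip x m) k = if k < m then 1 - bitAt x k else bitAt x k := by
    intro k hk
    rw [bitAt_of_lt _ hk, bitAt_of_lt _ hk]
    by_cases hkm : k < m <;> cases hx : x ⟨k, hk⟩ <;> simp [Flip, hkm, hx]
  have hlow : ∑ k ∈ range m, bitAt (Flip x m) k = ∑ k ∈ range m, (1 - bitAt x k) :=
    sum_congr rfl fun k hk => by
      rw [mem_range] at hk; rw [hbit k (by omega), if_pos hk]
  have hhigh : ∑ k ∈ Ico m N, bitAt (Flip x m) k = ∑ k ∈ Ico m N, bitAt x k :=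
    sum_congr rfl fun k hk => by
      rw [mem_Ico] at hk; rw [hbit k hk.2, if_neg (by omega)]
  simp only [wt_eq_windowOnes, windowOnes, add_zero, ← sum_range_add_sum_Ico _ hm, hlow, hhigh,
    sum_sub_distrib, sum_const, card_range, nsmul_eq_mul, mul_one]
  ring

lemma wt_flip_rot {m : ℕ} (hm : m ≤ N) (d : ℕ) :
    (wt (Flip (rot x d) m) : ℤ) = wt x + m - 2 * windowOnes x m d := by
  rw [wt_flip _ hm, wt_rot, windowOnes_rot, zero_add]

lemma abs_wt_flip_rot_succ_sub_le_two {m : ℕ} (hm : m ≤ N) (d : ℕ) :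
    |(wt (Flip (rot x (d + 1)) m) : ℤ) - wt (Flip (rot x d) m)| ≤ 2 := by
  rw [wt_flip_rot x hm, wt_flip_rot x hm, windowOnes_succ, abs_le]
  have := bitAt_nonneg x d; have := bitAt_le_one x d
  have := bitAt_nonneg x (d + m); have := bitAt_le_one x (d + m)
  constructor <;> linarith

end Window

/-- `TCmem m x j` unfolds to `j ≤ 2*m-2 ∧ IsBalanced m (cyc x j)`. -/
def IsBalanced (m : ℕ) (x : Fin (2*m-1) → Bool) : Prop :=
  wt (Flip x m) = m - 1 ∨ wt (Flip x m) = m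

section Balanced

variable {m : ℕ} [NeZero (2*m-1)] (y : Fin (2*m-1) → Bool)

lemma windowOnes_add_windowOnes_self :
    windowOnes y m 0 + windowOnes y m m = wt y + bitAt y 0 := by
  have hm : 2*m-1 ≠ 0 := NeZero.ne _
  have h := sum_range_add (bitAt y) m m
  rw [show m + m = (2*m-1) + 1 by omega, sum_range_succ] at h
  simp only [windowOnes, add_zero, wt_eq_windowOnes, add_comm _ m]
  rw [← h]
  simpa using bitAt_add_self y 0

lemma CR_flip {d : ℕ} (hd : d ≤ m - 1) :
    CR m (Flip y m) d = 2 * (windowOnes y m d - windowOnes y m 0) := by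
  induction d with
  | zero => simp [CR]
  | succ d ih =>
    have h1 : d < 2*m-1 := by omega
    have h2 : d + m < 2*m-1 := by omega
    rw [CR, dif_pos h1, dif_pos h2, ih (by omega), windowOnes_succ, bitAt_of_lt y h1,
      bitAt_of_lt y h2]
    have hc1 : Flip y m ⟨d, h1⟩ = !y ⟨d, h1⟩ := by simp [Flip, show d < m by omega]
    have hc2 : Flip y m ⟨d + m, h2⟩ = y ⟨d + m, h2⟩ := by simp [Flip]
    rw [hc1, hc2]
    cases y ⟨d, h1⟩ <;> cases y ⟨d + m, h2⟩ <;> simp <;> ring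

lemma isBalanced_rot_iff (hy : IsBalanced m y) {d : ℕ} (hd : d ≤ m - 1) :
    IsBalanced m (rot y d) ↔ CR m (Flip y m) d = 0 := by
  have hm : 2*m-1 ≠ 0 := NeZero.ne _
  have h := wt_flip_rot y (m := m) (by omega) d
  have h0 := wt_flip y (m := m) (by omega)
  rw [CR_flip y hd]
  unfold IsBalanced at hy ⊢
  omega

lemma exists_isBalanced_rot :
    ∃ d, 1 ≤ d ∧ d ≤ m ∧ IsBalanced m (rot y d) := by
  have hm : 2*m-1 ≠ 0 := NeZero.ne _
  by_contra! hnone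
  have hside := lt_iff_lt_of_abs_sub_le_two (g := fun d => (wt (Flip (rot y d) m) : ℤ))
    (k := (m : ℤ) - 1) (a := 1) (b := m) (by omega)
    (fun d _ _ => abs_wt_flip_rot_succ_sub_le_two y (by omega) d)
    (fun d h1 h2 => by
      have := hnone d h1 h2
      unfold IsBalanced at this
      omega)
  have hf1 := wt_flip_rot y (m := m) (by omega) 1
  have hfm := wt_flip_rot y (m := m) (by omega) m
  rw [windowOnes_succ, zero_add] at hf1
  have hsum := windowOnes_add_windowOnes_self y
  have := bitAt_nonneg y 0; have := bitAt_le_one y 0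
  have := bitAt_nonneg y m; have := bitAt_le_one y m
  have hb1 := hnone 1 le_rfl (by omega)
  have hbm := hnone m (by omega) le_rfl
  unfold IsBalanced at hb1 hbm
  omega

end Balanced

section Gamma

variable {m : ℕ} {C : Set (Fin (2*m-1) → Bool)}

lemma zero_mem_gammaC {x : Fin (2*m-1) → Bool}
    (hx : x ∈ C) (hbal : IsBalanced m x) : 0 ∈ GammaC m C (Flip x m) := by
  have h0 : TCmem m x 0 := ⟨Nat.zero_le _, by rw [cyc_zero]; exact hbal⟩
  exact ⟨Nat.zero_le _, x, hx, by rw [cyc_zero], ⟨0, h0⟩, Nat.sInf_eq_zero.2 (Or.inl h0)⟩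

lemma mem_gammaC_of_CR_ne_zero (hcyc : ∀ x ∈ C, ∀ i, cyc x i ∈ C) {x₀ : Fin (2*m-1) → Bool} (hx₀ : x₀ ∈ C)
    (hbal : IsBalanced m x₀) {j : ℕ} (hj1 : 1 ≤ j) (hjm : j ≤ m - 1)
    (hCR : ∀ d, 1 ≤ d → d ≤ j → CR m (Flip x₀ m) d ≠ 0) :
    j ∈ GammaC m C (Flip x₀ m) := by
  have : NeZero (2*m-1) := ⟨by omega⟩
  have hN : j < 2*m-1 := by omega
  set x := rot x₀ j
  have hxC : x ∈ C := by
    have := hcyc x₀ hx₀ (2*m-1 - j)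
    rwa [cyc_eq_rot x₀ (by omega), Nat.sub_sub_self hN.le] at this
  have hxj : cyc x j = x₀ := by
    rw [cyc_eq_rot x hN, rot_rot, Nat.add_sub_cancel' hN.le, rot_self]
  have hleast : IsLeast {j' | TCmem m x j'} j := by
    refine ⟨⟨by omega, by rw [hxj]; exact hbal⟩, fun i hi => ?_⟩
    by_contra! hij
    have hi' : cyc x i = rot x₀ (j - i) := by
      rw [← hxj, ← cyc_sub_eq_rot_cyc x hN (Nat.sub_le j i), Nat.sub_sub_self hij.le]
    exact hCR (j - i) (by omega) (by omega)
      ((isBalanced_rot_iff x₀ hbal (by omega)).1 (hi' ▸ hi.2))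
  exact ⟨by omega, x, hxC, by rw [hxj], ⟨j, hleast.1⟩, hleast.csInf_eq⟩

lemma le_and_CR_ne_zero_of_mem_gammaC {x₀ : Fin (2*m-1) → Bool} (hbal : IsBalanced m x₀) {j : ℕ}
    (hj : j ∈ GammaC m C (Flip x₀ m)) (hj1 : 1 ≤ j) :
    j ≤ m - 1 ∧ ∀ d, 1 ≤ d → d ≤ j → CR m (Flip x₀ m) d ≠ 0 := by
  obtain ⟨hj2, x, -, hflip, -, hmin⟩ := hj
  have : NeZero (2*m-1) := ⟨by omega⟩
  have hN : j < 2*m-1 := by omega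
  set y := cyc x j
  have hy : IsBalanced m y := by unfold IsBalanced; rw [hflip]; exact hbal
  have hnot : ∀ d, 1 ≤ d → d ≤ j → ¬ IsBalanced m (rot y d) := fun d hd1 hdj hd => by
    have hlt : j - d < sInf {j' | TCmem m x j'} := by omega
    exact Nat.notMem_of_lt_sInf hlt ⟨by omega, by rwa [cyc_sub_eq_rot_cyc x hN hdj]⟩
  obtain ⟨d, hd1, hdm, hdbal⟩ := exists_isBalanced_rot y
  have hjd : j < d := by
    by_contra! hdj
    exact hnot d hd1 hdj hdbal
  refine ⟨by omega, fun d hd1 hdj hCR => hnot d hd1 hdj ?_⟩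
  rw [isBalanced_rot_iff y hy (by omega), hflip]
  exact hCR

end Gamma

/-- for `C` closed under cyclic shifts and `c ∈ B(C)`,
`Γ_C(c) = {0} ∪ {i ∈ {1,…,m−1} : CR(c)_j ≠ 0 for all 1 ≤ j ≤ i}`. -/
theorem stmt17 (m : ℕ) (C : Set (Fin (2*m-1) → Bool))
    (hcyc : ∀ x ∈ C, ∀ i, cyc x i ∈ C)
    (c : Fin (2*m-1) → Bool)
    (hc : ∃ x ∈ C, Flip x m = c ∧ (wt c = m - 1 ∨ wt c = m)) :
    GammaC m C c =
      {0} ∪ {i | 1 ≤ i ∧ i ≤ m - 1 ∧ ∀ j, 1 ≤ j → j ≤ i → CR m c j ≠ 0} := by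
  obtain ⟨x₀, hx₀, rfl, hbal⟩ := hc
  ext j
  simp only [Set.mem_union, Set.mem_singleton_iff, Set.mem_ofPred_eq]
  constructor
  · intro hj
    rcases Nat.eq_zero_or_pos j with rfl | hj1
    · exact Or.inl rfl
    · exact Or.inr ⟨hj1, le_and_CR_ne_zero_of_mem_gammaC hbal hj hj1⟩
  · rintro (rfl | ⟨hj1, hjm, hCR⟩)
    · exact zero_mem_gammaC hx₀ hbal
    · exact mem_gammaC_of_CR_ne_zero hcyc hx₀ hbal hj1 hjm hCR
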